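/- For fixed real w₁, w₂, the function h ↦ w₁ ⊕_h w₂ = h · ln(exp(w₁/h) + exp(w₂/h)) is monotone nondecreasing in h on (0, ∞). -/
import Mathlib

theorem maslov_dequantization_monotone (w₁ w₂ : ℝ) :
    MonotoneOn (fun h : ℝ => h * Real.log (Real.exp (w₁ / h) + Real.exp (w₂ / h)))
      (Set.Ioi 0) := by
  intro a ha b hb hab
  simp only [Set.mem_Ioi] at ha hb
  have ht0 : (0:ℝ) ≤ a / b := (div_pos ha hb).le
  have ht1 : a / b ≤ 1 := (div_le_one hb).2 hab
  set T := Real.exp (w₁ / a) + Real.exp (w₂ / a) with hTdef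
  have hT : 0 < T := by positivity
  have key : T ^ (a / b) ≤ Real.exp (w₁ / b) + Real.exp (w₂ / b) := by
    have h := NNReal.rpow_add_le_add_rpow (Real.exp (w₁ / a)).toNNReal
      (Real.exp (w₂ / a)).toNNReal ht0 ht1
    have h' : T ^ (a / b) ≤ (Real.exp (w₁ / a)) ^ (a / b) +
        (Real.exp (w₂ / a)) ^ (a / b) := by
      have := (NNReal.coe_le_coe).2 h
      push_cast [Real.coe_toNNReal _ (Real.exp_pos _).le,
        NNReal.coe_rpow] at this
      simpa [hTdef] using this
    have e1 : (Real.exp (w₁ / a)) ^ (a / b) = Real.exp (w₁ / b) := by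
      rw [← Real.exp_mul]
      congr 1
      field_simp

    have e2 : (Real.exp (w₂ / a)) ^ (a / b) = Real.exp (w₂ / b) := by
      rw [← Real.exp_mul]
      congr 1
      field_simp

    rw [e1, e2] at h'
    exact h'
  have hS : 0 < Real.exp (w₁ / b) + Real.exp (w₂ / b) := by positivity
  calc a * Real.log T = b * ((a / b) * Real.log T) := by
        field_simp
    _ = b * Real.log (T ^ (a / b)) := by rw [Real.log_rpow hT]
    _ ≤ b * Real.log (Real.exp (w₁ / b) + Real.exp (w₂ / b)) := by
        gcongr
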